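/- arXiv:2506.13025 — 2 statements merged into one kernel-verified Lean document; each statement's English description precedes it below -/
import Mathlib

section
/- Under the permutation missingness model, for every x ∈ 𝒳 and y ∈ 𝒴, P(X¹=x, Y¹=y) = P(R₁=1, Y¹=y) · P(X¹=x | R₁=1, Y¹=y, R₂=1) · [ 1 + P(X¹=x | R₁=0, R₂=1) · P(R₁=0) / ( Σ_{y'∈𝒴} P(X¹=x | R₁=1, Y¹=y', R₂=1) · P(R₁=1, Y¹=y') ) ]. -/
/-!
Condition (ii) given `R₁ = 1, Y¹ = y'` turns `P(X¹=x | R₁=1, Y¹=y', R₂=1) P(R₁=1, Y¹=y')` into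
`P(R₁=1, Y¹=y', X¹=x)`, so the denominator is `P(R₁=1, X¹=x)`; condition (ii) given `R₁ = 0`,
summed over the values of `Y¹`, turns `P(X¹=x | R₁=0, R₂=1) P(R₁=0)` into `P(R₁=0, X¹=x)`.
By (i), `P(R₁=r, Y¹=y, X¹=x)` is proportional to `P(R₁=r, X¹=x)` for both values of `r`, and
adding the two cases gives the formula.
-/

open MeasureTheory

/-- `pr μ s` is the probability of the event `s`, as a real number. -/
noncomputable def pr {Ω : Type*} [MeasurableSpace Ω] (μ : Measure Ω) (s : Set Ω) : ℝ :=
  (μ s).toReal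

/-- `cpr μ s t` is the conditional probability of `s` given `t`, as a real number. -/
noncomputable def cpr {Ω : Type*} [MeasurableSpace Ω] (μ : Measure Ω) (s t : Set Ω) : ℝ :=
  pr μ (s ∩ t) / pr μ t

section

variable {Ω : Type*} [MeasurableSpace Ω]

/-- Conditional independence of `a` and `b` given `t`, cleared of denominators so that it
also makes sense when `pr μ t = 0`. -/
def IndepGiven (μ : Measure Ω) (a b t : Set Ω) : Prop :=
  pr μ (a ∩ b ∩ t) * pr μ t = pr μ (a ∩ t) * pr μ (b ∩ t)

variable {μ : Measure Ω} {a b c s t : Set Ω}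

lemma IndepGiven.cpr_inter_mul_pr (h : IndepGiven μ a b t) (hta : 0 < pr μ (t ∩ a)) :
    cpr μ b (t ∩ a) * pr μ t = pr μ (b ∩ t) := by
  unfold IndepGiven at h
  unfold cpr
  rw [show b ∩ (t ∩ a) = a ∩ b ∩ t by tauto_set, Set.inter_comm t a] at *
  field_simp
  linear_combination h

lemma IndepGiven.pr_inter_mul_pr_inter_eq (ha : IndepGiven μ a c t) (hb : IndepGiven μ b c t)
    (ht : 0 < pr μ t) : pr μ (b ∩ c ∩ t) * pr μ (a ∩ t) = pr μ (a ∩ c ∩ t) * pr μ (b ∩ t) :=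
  mul_right_cancel₀ ht.ne' <| by
    unfold IndepGiven at ha hb
    linear_combination pr μ (a ∩ t) * hb - pr μ (b ∩ t) * ha

variable [IsFiniteMeasure μ]

lemma pr_mono (h : s ⊆ t) : pr μ s ≤ pr μ t :=
  ENNReal.toReal_mono (measure_ne_top μ t) (measure_mono h)

lemma sum_pr_fiber_inter {β : Type*} [MeasurableSpace β] [MeasurableSingletonClass β]
    {Y : Ω → β} (hY : Measurable Y) {𝒴 : Finset β} (hrange : ∀ ω, Y ω ∈ 𝒴) (s : Set Ω) :
    ∑ y ∈ 𝒴, pr μ ({ω | Y ω = y} ∩ s) = pr μ s := by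
  have hfib : ∀ y ∈ 𝒴, MeasurableSet (Y ⁻¹' {y}) := fun y _ => hY (measurableSet_singleton y)
  have key := sum_measureReal_preimage_singleton (μ := μ.restrict s) 𝒴 hfib
  rw [Set.preimage_eq_univ_iff.mpr (fun _ ⟨ω, hω⟩ => hω ▸ hrange ω),
    measureReal_restrict_apply_univ] at key
  change _ = μ.real s
  rw [← key]
  exact Finset.sum_congr rfl fun y hy => (measureReal_restrict_apply (hfib y hy)).symm

lemma pr_true_inter_add_pr_false_inter {B : Ω → Bool} (hB : Measurable B) (s : Set Ω) :
    pr μ ({ω | B ω = true} ∩ s) + pr μ ({ω | B ω = false} ∩ s) = pr μ s := by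
  simpa only [Fintype.sum_bool] using
    sum_pr_fiber_inter hB (𝒴 := Finset.univ) (fun _ => Finset.mem_univ _) s

lemma IndepGiven.of_cpr_eq_mul (h : cpr μ (a ∩ b) t = cpr μ a t * cpr μ b t) :
    IndepGiven μ a b t := by
  unfold IndepGiven
  by_cases ht : pr μ t = 0
  · have hat : pr μ (a ∩ t) = 0 :=
      le_antisymm (ht ▸ pr_mono Set.inter_subset_right) ENNReal.toReal_nonneg
    rw [ht, hat, mul_zero, zero_mul]
  · unfold cpr at h
    field_simp at h
    linear_combination h

lemma IndepGiven.of_forall_fiber {β : Type*} [MeasurableSpace β] [MeasurableSingletonClass β]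
    {Y : Ω → β} (hY : Measurable Y) {𝒴 : Finset β} (hrange : ∀ ω, Y ω ∈ 𝒴)
    (h : ∀ y ∈ 𝒴, IndepGiven μ a ({ω | Y ω = y} ∩ b) t) : IndepGiven μ a b t := by
  unfold IndepGiven at *
  rw [← sum_pr_fiber_inter hY hrange (a ∩ b ∩ t), ← sum_pr_fiber_inter hY hrange (b ∩ t),
    Finset.sum_mul, Finset.mul_sum]
  refine Finset.sum_congr rfl fun y hy => ?_
  rw [show {ω | Y ω = y} ∩ (a ∩ b ∩ t) = a ∩ ({ω | Y ω = y} ∩ b) ∩ t by tauto_set,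
    ← Set.inter_assoc {ω | Y ω = y} b t]
  exact h y hy

end

theorem stmt4_general
    {Ω : Type*} [MeasurableSpace Ω] (μ : Measure Ω) [IsProbabilityMeasure μ]
    {𝒳 : Type*}
    (Y1 : Ω → ℝ) (X1 : Ω → 𝒳) (R1 R2 : Ω → Bool)
    (hY1m : Measurable Y1) (hR1m : Measurable R1)
    (𝒴 : Finset ℝ) (hrange : ∀ ω, Y1 ω ∈ 𝒴)
    (hCI1 : ∀ x : 𝒳, 0 < pr μ {ω | X1 ω = x} → ∀ (r : Bool) (y : ℝ),
      cpr μ {ω | R1 ω = r ∧ Y1 ω = y} {ω | X1 ω = x} =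
        cpr μ {ω | R1 ω = r} {ω | X1 ω = x} * cpr μ {ω | Y1 ω = y} {ω | X1 ω = x})
    (hCI2a : ∀ y : ℝ, 0 < pr μ {ω | R1 ω = true ∧ Y1 ω = y} → ∀ (r : Bool) (x : 𝒳),
      cpr μ {ω | R2 ω = r ∧ X1 ω = x} {ω | R1 ω = true ∧ Y1 ω = y} =
        cpr μ {ω | R2 ω = r} {ω | R1 ω = true ∧ Y1 ω = y} *
          cpr μ {ω | X1 ω = x} {ω | R1 ω = true ∧ Y1 ω = y})
    (hCI2b : ∀ (r : Bool) (y : ℝ) (x : 𝒳),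
      cpr μ {ω | R2 ω = r ∧ Y1 ω = y ∧ X1 ω = x} {ω | R1 ω = false} =
        cpr μ {ω | R2 ω = r} {ω | R1 ω = false} *
          cpr μ {ω | Y1 ω = y ∧ X1 ω = x} {ω | R1 ω = false})
    (hpos1 : ∀ x : 𝒳, ∀ y ∈ 𝒴,
      0 < pr μ {ω | R1 ω = true ∧ R2 ω = true ∧ Y1 ω = y ∧ X1 ω = x})
    (hpos2 : 0 < pr μ {ω | R1 ω = false ∧ R2 ω = true}) :
    ∀ x : 𝒳, ∀ y ∈ 𝒴,
      pr μ {ω | X1 ω = x ∧ Y1 ω = y} =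
        pr μ {ω | R1 ω = true ∧ Y1 ω = y} *
          cpr μ {ω | X1 ω = x} {ω | R1 ω = true ∧ Y1 ω = y ∧ R2 ω = true} *
          (1 + cpr μ {ω | X1 ω = x} {ω | R1 ω = false ∧ R2 ω = true} *
              pr μ {ω | R1 ω = false} /
              (∑ y' ∈ 𝒴, cpr μ {ω | X1 ω = x} {ω | R1 ω = true ∧ Y1 ω = y' ∧ R2 ω = true} *
                pr μ {ω | R1 ω = true ∧ Y1 ω = y'})) := by
  intro x y hy
  simp only [Set.ofPred_and] at hCI1 hCI2a hCI2b hpos1 hpos2 ⊢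
  set E := {ω | X1 ω = x}
  set R := {ω | R1 ω = true}
  set R' := {ω | R1 ω = false}
  set S := {ω | R2 ω = true}
  have hpos : ∀ y' ∈ 𝒴, ∀ {s}, R ∩ (S ∩ ({ω | Y1 ω = y'} ∩ E)) ⊆ s → 0 < pr μ s :=
    fun y' hy' _ hs => (hpos1 x y' hy').trans_le (pr_mono hs)
  have hpE : 0 < pr μ E := hpos y hy (by tauto_set)
  have hW : 0 < pr μ (R ∩ E) := hpos y hy (by tauto_set)
  have hcond1 : ∀ y' ∈ 𝒴,
      cpr μ E (R ∩ ({ω | Y1 ω = y'} ∩ S)) * pr μ (R ∩ {ω | Y1 ω = y'}) =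
        pr μ ({ω | Y1 ω = y'} ∩ (R ∩ E)) := fun y' hy' => by
    rw [← Set.inter_assoc,
      show {ω | Y1 ω = y'} ∩ (R ∩ E) = E ∩ (R ∩ {ω | Y1 ω = y'}) by tauto_set]
    exact (IndepGiven.of_cpr_eq_mul (hCI2a y' (hpos y' hy' (by tauto_set)) true x))
      |>.cpr_inter_mul_pr (hpos y' hy' (by tauto_set))
  have hcond0 : cpr μ E (R' ∩ S) * pr μ R' = pr μ (R' ∩ E) := by
    rw [Set.inter_comm R' E]
    exact (IndepGiven.of_forall_fiber hY1m hrange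
      fun y' _ => IndepGiven.of_cpr_eq_mul (hCI2b true y' x)).cpr_inter_mul_pr hpos2
  have hprop : pr μ (R' ∩ {ω | Y1 ω = y} ∩ E) * pr μ (R ∩ E) =
      pr μ (R ∩ {ω | Y1 ω = y} ∩ E) * pr μ (R' ∩ E) :=
    (IndepGiven.of_cpr_eq_mul (hCI1 x hpE true y)).pr_inter_mul_pr_inter_eq
      (IndepGiven.of_cpr_eq_mul (hCI1 x hpE false y)) hpE
  have hsplit : pr μ (E ∩ {ω | Y1 ω = y}) =
      pr μ (R ∩ {ω | Y1 ω = y} ∩ E) + pr μ (R' ∩ {ω | Y1 ω = y} ∩ E) := by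
    rw [← pr_true_inter_add_pr_false_inter hR1m]
    congr 2 <;> tauto_set
  rw [Finset.sum_congr rfl hcond1, sum_pr_fiber_inter hY1m hrange, hcond0,
    mul_comm (pr μ (R ∩ _)), hcond1 y hy, hsplit,
    show {ω | Y1 ω = y} ∩ (R ∩ E) = R ∩ {ω | Y1 ω = y} ∩ E by tauto_set]
  field_simp
  linear_combination hprop

/-- **Identification of the full data law in the permutation missingness model.**
`Y¹` is real-valued with finite range `⊆ 𝒴`, `X¹` has values in a finite set `𝒳`, and
`R₁, R₂` are `Bool`-valued (`true = 1`) missingness indicators satisfying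
(i) `R₁ ⫫ Y¹ | X¹`; (ii) given `R₁ = 1, Y¹ = y`, `R₂ ⫫ X¹`, and given `R₁ = 0`,
`R₂ ⫫ (Y¹, X¹)`; (iii) positivity.  Then for every `x ∈ 𝒳` and `y ∈ 𝒴`,
`P(X¹=x, Y¹=y) = P(R₁=1, Y¹=y) ⬝ P(X¹=x | R₁=1, Y¹=y, R₂=1) ⬝
  [1 + P(X¹=x | R₁=0, R₂=1) P(R₁=0) / (∑_{y'} P(X¹=x | R₁=1, Y¹=y', R₂=1) P(R₁=1, Y¹=y'))]`. -/
theorem stmt4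
    {Ω : Type*} [MeasurableSpace Ω] (μ : Measure Ω) [IsProbabilityMeasure μ]
    {𝒳 : Type*} [Fintype 𝒳] [MeasurableSpace 𝒳] [MeasurableSingletonClass 𝒳]
    (Y1 : Ω → ℝ) (X1 : Ω → 𝒳) (R1 R2 : Ω → Bool)
    (hY1m : Measurable Y1) (hX1m : Measurable X1) (hR1m : Measurable R1)
    (hR2m : Measurable R2)
    (𝒴 : Finset ℝ) (hrange : ∀ ω, Y1 ω ∈ 𝒴)
    (hCI1 : ∀ x : 𝒳, 0 < pr μ {ω | X1 ω = x} → ∀ (r : Bool) (y : ℝ),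
      cpr μ {ω | R1 ω = r ∧ Y1 ω = y} {ω | X1 ω = x} =
        cpr μ {ω | R1 ω = r} {ω | X1 ω = x} * cpr μ {ω | Y1 ω = y} {ω | X1 ω = x})
    (hCI2a : ∀ y : ℝ, 0 < pr μ {ω | R1 ω = true ∧ Y1 ω = y} → ∀ (r : Bool) (x : 𝒳),
      cpr μ {ω | R2 ω = r ∧ X1 ω = x} {ω | R1 ω = true ∧ Y1 ω = y} =
        cpr μ {ω | R2 ω = r} {ω | R1 ω = true ∧ Y1 ω = y} *
          cpr μ {ω | X1 ω = x} {ω | R1 ω = true ∧ Y1 ω = y})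
    (hCI2b : ∀ (r : Bool) (y : ℝ) (x : 𝒳),
      cpr μ {ω | R2 ω = r ∧ Y1 ω = y ∧ X1 ω = x} {ω | R1 ω = false} =
        cpr μ {ω | R2 ω = r} {ω | R1 ω = false} *
          cpr μ {ω | Y1 ω = y ∧ X1 ω = x} {ω | R1 ω = false})
    (hpos1 : ∀ x : 𝒳, ∀ y ∈ 𝒴,
      0 < pr μ {ω | R1 ω = true ∧ R2 ω = true ∧ Y1 ω = y ∧ X1 ω = x})
    (hpos2 : 0 < pr μ {ω | R1 ω = false ∧ R2 ω = true}) :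
    ∀ x : 𝒳, ∀ y ∈ 𝒴,
      pr μ {ω | X1 ω = x ∧ Y1 ω = y} =
        pr μ {ω | R1 ω = true ∧ Y1 ω = y} *
          cpr μ {ω | X1 ω = x} {ω | R1 ω = true ∧ Y1 ω = y ∧ R2 ω = true} *
          (1 + cpr μ {ω | X1 ω = x} {ω | R1 ω = false ∧ R2 ω = true} *
              pr μ {ω | R1 ω = false} /
              (∑ y' ∈ 𝒴, cpr μ {ω | X1 ω = x} {ω | R1 ω = true ∧ Y1 ω = y' ∧ R2 ω = true} *
                pr μ {ω | R1 ω = true ∧ Y1 ω = y'})) :=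
  stmt4_general μ Y1 X1 R1 R2 hY1m hR1m 𝒴 hrange hCI1 hCI2a hCI2b hpos1 hpos2
end

section
/- Fix ρ > 0 and let P be a regular binary-outcome observed-data distribution. With μ(x) = P(Y=1 | X=x, R₁=1, R₂=1), ξ(x) = μ(x)/(1−μ(x)), ϖ(x) = P(X=x | R₁=0, R₂=1)/P(X=x | R₁=1, R₂=1), θ = E_P( ξ(X)/(ρ + ξ(X)) | R₁=0, R₂=1 ), and φ(o; P) = ρ ((1+ξ(x))/(ρ+ξ(x)))² (r₁ r₂ ϖ(x)/P(R₁=1, R₂=1)) (y − μ(x)) + ((1−r₁) r₂ / P(R₁=0, R₂=1)) ( ξ(x)/(ρ + ξ(x)) − θ ) for o = (x, y, r₁, r₂), one has E_P[φ(O; P)] = 0. -/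
open Finset

/-- The real value (`0` or `1`) of a bit. -/
noncomputable def bR (r : Bool) : ℝ := if r then 1 else 0

/-- A regular binary-outcome observed-data distribution of `O = (X, Y, R₁, R₂)` on
`𝒳 × {0,1} × {0,1} × {0,1}` (`Bool`-valued, `true = 1`): a probability mass function with
every point of positive probability. -/
def RegularB {𝒳 : Type*} [Fintype 𝒳] (p : 𝒳 → Bool → Bool → Bool → ℝ) : Prop :=
  (∑ x : 𝒳, ∑ y : Bool, ∑ r₁ : Bool, ∑ r₂ : Bool, p x y r₁ r₂) = 1 ∧
    ∀ (x : 𝒳) (y r₁ r₂ : Bool), 0 < p x y r₁ r₂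

/-- `P(R₁ = r₁, R₂ = r₂)`. -/
noncomputable def pRB {𝒳 : Type*} [Fintype 𝒳] (p : 𝒳 → Bool → Bool → Bool → ℝ)
    (r₁ r₂ : Bool) : ℝ :=
  ∑ x : 𝒳, ∑ y : Bool, p x y r₁ r₂

/-- `P(X = x | R₁ = r₁, R₂ = r₂)`. -/
noncomputable def pXB {𝒳 : Type*} [Fintype 𝒳] (p : 𝒳 → Bool → Bool → Bool → ℝ)
    (r₁ r₂ : Bool) (x : 𝒳) : ℝ :=
  (∑ y : Bool, p x y r₁ r₂) / pRB p r₁ r₂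

/-- `μ(x) = P(Y = 1 | X = x, R₁ = 1, R₂ = 1)`. -/
noncomputable def muB {𝒳 : Type*} [Fintype 𝒳] (p : 𝒳 → Bool → Bool → Bool → ℝ) (x : 𝒳) : ℝ :=
  p x true true true / (∑ y : Bool, p x y true true)

/-- `ξ(x) = μ(x)/(1 − μ(x))`, the conditional odds `odds(Y = 1 | X = x, R₁ = 1, R₂ = 1)`. -/
noncomputable def xiB {𝒳 : Type*} [Fintype 𝒳] (p : 𝒳 → Bool → Bool → Bool → ℝ) (x : 𝒳) : ℝ :=
  muB p x / (1 - muB p x)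

/-- The density ratio `ϖ(x) = P(X = x | R₁ = 0, R₂ = 1) / P(X = x | R₁ = 1, R₂ = 1)`. -/
noncomputable def varpiB {𝒳 : Type*} [Fintype 𝒳] (p : 𝒳 → Bool → Bool → Bool → ℝ) (x : 𝒳) : ℝ :=
  pXB p false true x / pXB p true true x

/-- `θ_ρ(Q) = E_Q(ξ(X)/(ρ + ξ(X)) | R₁ = 0, R₂ = 1)`. -/
noncomputable def thetaB {𝒳 : Type*} [Fintype 𝒳] (ρ : ℝ)
    (p : 𝒳 → Bool → Bool → Bool → ℝ) : ℝ :=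
  ∑ x : 𝒳, (xiB p x / (ρ + xiB p x)) * pXB p false true x

/-- The influence function `φ_ρ(o; Q)` at the observation `o = (x, y, r₁, r₂)`. -/
noncomputable def phiB {𝒳 : Type*} [Fintype 𝒳] (ρ : ℝ)
    (p : 𝒳 → Bool → Bool → Bool → ℝ) (x : 𝒳) (y r₁ r₂ : Bool) : ℝ :=
  ρ * ((1 + xiB p x) / (ρ + xiB p x)) ^ 2 *
      (bR r₁ * bR r₂ * varpiB p x / pRB p true true) * (bR y - muB p x) +
    ((1 - bR r₁) * bR r₂ / pRB p false true) * (xiB p x / (ρ + xiB p x) - thetaB ρ p)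

/-!
Summing `φ` over `(y, r₁, r₂)` at fixed `x` leaves two terms. The first is a multiple of
`∑_y P(x, y, 1, 1) (y - μ(x))`, which vanishes because `μ(x)` is the conditional mean of `Y`;
the second is `P(X = x | R₁ = 0, R₂ = 1) (ξ(x)/(ρ + ξ(x)) - θ)`, whose sum over `x` vanishes
because `θ` is the conditional mean of `ξ(X)/(ρ + ξ(X))` in that stratum.
-/

section InfluenceFunction

variable {𝒳 : Type*} [Fintype 𝒳] (p : 𝒳 → Bool → Bool → Bool → ℝ)

lemma RegularB.sum_pos {p : 𝒳 → Bool → Bool → Bool → ℝ} (hp : RegularB p) (x : 𝒳)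
    (r₁ r₂ : Bool) : 0 < ∑ y : Bool, p x y r₁ r₂ :=
  Finset.sum_pos (fun y _ => hp.2 x y r₁ r₂) univ_nonempty

lemma RegularB.pRB_pos {p : 𝒳 → Bool → Bool → Bool → ℝ} (hp : RegularB p) (r₁ r₂ : Bool) :
    0 < pRB p r₁ r₂ := by
  have hne : (univ : Finset 𝒳).Nonempty :=
    nonempty_of_sum_ne_zero (hp.1.symm ▸ one_ne_zero)
  exact Finset.sum_pos (fun x _ => hp.sum_pos x r₁ r₂) hne

lemma sum_pXB {r₁ r₂ : Bool} (h : pRB p r₁ r₂ ≠ 0) : ∑ x, pXB p r₁ r₂ x = 1 := by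
  simp only [pXB]
  rw [← sum_div]
  exact div_self h

lemma sum_mul_bR_sub_muB {x : 𝒳} (h : ∑ y : Bool, p x y true true ≠ 0) :
    ∑ y : Bool, p x y true true * (bR y - muB p x) = 0 := by
  rw [Fintype.sum_bool] at h
  simp only [Fintype.sum_bool, bR, muB, Bool.false_eq_true, reduceIte]
  field_simp
  ring

lemma sum_sub_thetaB_mul_pXB (ρ : ℝ) (h : pRB p false true ≠ 0) :
    ∑ x, (xiB p x / (ρ + xiB p x) - thetaB ρ p) * pXB p false true x = 0 := by
  simp only [sub_mul, sum_sub_distrib, ← mul_sum, sum_pXB p h, mul_one]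
  exact sub_eq_zero.mpr rfl

lemma sum_mul_phiB (ρ : ℝ) (x : 𝒳) :
    ∑ y : Bool, ∑ r₁ : Bool, ∑ r₂ : Bool, p x y r₁ r₂ * phiB ρ p x y r₁ r₂ =
      ρ * ((1 + xiB p x) / (ρ + xiB p x)) ^ 2 * (varpiB p x / pRB p true true) *
          ∑ y : Bool, p x y true true * (bR y - muB p x) +
        (xiB p x / (ρ + xiB p x) - thetaB ρ p) * pXB p false true x := by
  simp only [Fintype.sum_bool, phiB, pXB, bR, Bool.false_eq_true, reduceIte]
  ring

end InfluenceFunction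

theorem stmt12_general
    {𝒳 : Type*} [Fintype 𝒳] (ρ : ℝ)
    (p : 𝒳 → Bool → Bool → Bool → ℝ) (hp : RegularB p) :
    (∑ x : 𝒳, ∑ y : Bool, ∑ r₁ : Bool, ∑ r₂ : Bool,
      p x y r₁ r₂ * phiB ρ p x y r₁ r₂) = 0 := by
  simp only [sum_mul_phiB, sum_mul_bR_sub_muB p (hp.sum_pos _ true true).ne', mul_zero, zero_add]
  exact sum_sub_thetaB_mul_pXB p ρ (hp.pRB_pos false true).ne'

/-- **The binary-outcome influence function has mean zero.**
For `ρ > 0` and a regular binary-outcome observed-data distribution `P`, the influence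
function `φ_ρ(·; P)` satisfies `E_P[φ_ρ(O; P)] = 0`. -/
theorem stmt12
    {𝒳 : Type*} [Fintype 𝒳] (ρ : ℝ) (hρ : 0 < ρ)
    (p : 𝒳 → Bool → Bool → Bool → ℝ) (hp : RegularB p) :
    (∑ x : 𝒳, ∑ y : Bool, ∑ r₁ : Bool, ∑ r₂ : Bool,
      p x y r₁ r₂ * phiB ρ p x y r₁ r₂) = 0 :=
  stmt12_general ρ p hp
end
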